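/- Let V be a complex inner product space, n ≥ 1, and for i = 1,…,m and α = 1,…,n let a_{iα} ∈ End(V) be anticommuting-type Clifford elements of the form a_{iα} = γ(Å^α(e_i)·ν_α) arising from a submanifold's traceless shape operators. Then for any spinor ψ, Σ_{i,α} |γ(Å^α(e_i))ψ|² - Σ_i |Σ_α γ(Å^α(e_i)·ν_α)ψ|² = (1/1)·[ n Σ_{i,β} |γ(Å^β(e_i))ψ - (1/n) Σ_α γ(ν_β · Å^α(e_i) · ν_α)ψ|² - (n-1)|Å|² |ψ|² ]; in particular Σ_i |Σ_α γ(Å^α(e_i)·ν_α)ψ|² ≤ Σ_{i,α}|γ(Å^α(e_i))ψ|² + (n-1)|Å|²|ψ|². -/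

import Mathlib

/-!
For each `i`, the operator `T_i = Σ_α γ(Å^α(e_i)) γ(ν_α)` is skew-adjoint, because each
factor pair anticommutes (`Å^α(e_i)` is tangent, `ν_α` normal). Hence
`Σ_β ⟨γ(Å^β(e_i))ψ, γ(ν_β) T_i ψ⟩ = -⟨ψ, T_i² ψ⟩ = |T_i ψ|²`, and expanding the squares on
the right, using `|γ(v)φ| = |v| |φ|` and `|ν_β| = 1`, leaves exactly the left-hand side.
The inequality drops the nonnegative sum of squares.
-/

open scoped InnerProductSpace

section

variable {E V : Type*} [NormedAddCommGroup E] [InnerProductSpace ℝ E]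
  [NormedAddCommGroup V] [InnerProductSpace ℂ V]

def CliffordRelations (γ : E →ₗ[ℝ] Module.End ℂ V) : Prop :=
  ∀ v w : E, γ v * γ w + γ w * γ v = (((-(2 * ⟪v, w⟫_ℝ)) : ℝ) : ℂ) • (1 : Module.End ℂ V)

def IsSkewAdjointFamily (γ : E →ₗ[ℝ] Module.End ℂ V) : Prop :=
  ∀ (v : E) (x y : V), ⟪γ v x, y⟫_ℂ = -⟪x, γ v y⟫_ℂ

namespace CliffordRelations

variable {γ : E →ₗ[ℝ] Module.End ℂ V}

theorem apply_apply_self (hcl : CliffordRelations γ) (v : E) (x : V) :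
    γ v (γ v x) = -((‖v‖ ^ 2 : ℝ) : ℂ) • x := by
  have h := congr($(hcl v v) x)
  simp only [LinearMap.add_apply, Module.End.mul_apply, LinearMap.smul_apply,
    Module.End.one_apply, real_inner_self_eq_norm_sq, ← two_smul ℂ (γ v (γ v x))] at h
  rw [← inv_smul_smul₀ (two_ne_zero (α := ℂ)) (γ v (γ v x)), h, smul_smul]
  push_cast
  ring_nf

theorem anticomm (hcl : CliffordRelations γ) {v w : E} (hvw : ⟪v, w⟫_ℝ = 0) (x : V) :
    γ v (γ w x) = -γ w (γ v x) := by
  have h := congr($(hcl v w) x)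
  simp only [LinearMap.add_apply, Module.End.mul_apply, hvw,
    mul_zero, neg_zero, Complex.ofReal_zero, zero_smul] at h
  exact eq_neg_of_add_eq_zero_left h

theorem norm_apply_sq (hcl : CliffordRelations γ) (hskew : IsSkewAdjointFamily γ)
    (v : E) (x : V) : ‖γ v x‖ ^ 2 = ‖v‖ ^ 2 * ‖x‖ ^ 2 := by
  have h : ⟪γ v x, γ v x⟫_ℂ = ((‖v‖ ^ 2 : ℝ) : ℂ) * ⟪x, x⟫_ℂ := by
    rw [hskew, hcl.apply_apply_self, inner_smul_right]
    ring
  rw [← inner_self_eq_norm_sq (𝕜 := ℂ) (γ v x), ← inner_self_eq_norm_sq (𝕜 := ℂ) x, h,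
    RCLike.re_to_complex, RCLike.re_to_complex, Complex.re_ofReal_mul]

variable {ι : Type*} [Fintype ι]

theorem inner_sum_apply_apply_eq_neg_inner (hcl : CliffordRelations γ)
    (hskew : IsSkewAdjointFamily γ) (a b : ι → E) (hab : ∀ α, ⟪a α, b α⟫_ℝ = 0) (x y : V) :
    ⟪∑ α, γ (a α) (γ (b α) x), y⟫_ℂ = -⟪x, ∑ α, γ (a α) (γ (b α) y)⟫_ℂ := by
  rw [sum_inner, inner_sum, ← Finset.sum_neg_distrib]
  refine Finset.sum_congr rfl fun α _ => ?_
  rw [hskew, hskew, neg_neg, hcl.anticomm (real_inner_comm (a α) (b α) ▸ hab α),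
    inner_neg_right]

theorem sum_inner_apply_apply_sum (hcl : CliffordRelations γ)
    (hskew : IsSkewAdjointFamily γ) (a b : ι → E) (hab : ∀ α, ⟪a α, b α⟫_ℝ = 0) (ψ : V) :
    ∑ β, ⟪γ (a β) ψ, γ (b β) (∑ α, γ (a α) (γ (b α) ψ))⟫_ℂ
      = ⟪∑ α, γ (a α) (γ (b α) ψ), ∑ α, γ (a α) (γ (b α) ψ)⟫_ℂ := by
  simp only [hskew (a _) ψ, Finset.sum_neg_distrib, ← inner_sum,
    hcl.inner_sum_apply_apply_eq_neg_inner hskew a b hab]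

theorem sum_norm_sub_inv_card_smul_sq (hcl : CliffordRelations γ)
    (hskew : IsSkewAdjointFamily γ) (a b : ι → E) (hab : ∀ α, ⟪a α, b α⟫_ℝ = 0)
    (hb : ∀ β, ‖b β‖ = 1) (ψ : V) :
    ∑ β, ‖γ (a β) ψ
        - ((Fintype.card ι : ℂ))⁻¹ • ∑ α, γ (b β) (γ (a α) (γ (b α) ψ))‖ ^ 2
      = (∑ β, ‖a β‖ ^ 2) * ‖ψ‖ ^ 2
        - (Fintype.card ι : ℝ)⁻¹ * ‖∑ α, γ (a α) (γ (b α) ψ)‖ ^ 2 := by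
  set S := ∑ α, γ (a α) (γ (b α) ψ)
  set c : ℝ := (Fintype.card ι : ℝ)⁻¹
  have hc : ((Fintype.card ι : ℂ))⁻¹ = ((c : ℝ) : ℂ) := by
    simp only [c, Complex.ofReal_inv, Complex.ofReal_natCast]
  have hterm : ∀ β,
      ‖γ (a β) ψ - ((Fintype.card ι : ℂ))⁻¹ • ∑ α, γ (b β) (γ (a α) (γ (b α) ψ))‖ ^ 2
        = ‖a β‖ ^ 2 * ‖ψ‖ ^ 2 - 2 * (c * (⟪γ (a β) ψ, γ (b β) S⟫_ℂ).re) + c ^ 2 * ‖S‖ ^ 2 := by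
    intro β
    rw [← map_sum, norm_sub_sq (𝕜 := ℂ), hc, inner_smul_right, norm_smul, mul_pow,
      hcl.norm_apply_sq hskew, hcl.norm_apply_sq hskew, hb, RCLike.re_to_complex,
      Complex.re_ofReal_mul, Complex.norm_real, Real.norm_eq_abs, sq_abs]
    ring
  have hcross : (∑ β, ⟪γ (a β) ψ, γ (b β) S⟫_ℂ).re = ‖S‖ ^ 2 := by
    rw [hcl.sum_inner_apply_apply_sum hskew a b hab, inner_self_eq_norm_sq_to_K]
    norm_cast
  simp only [hterm, Finset.sum_add_distrib, Finset.sum_sub_distrib, ← Finset.sum_mul,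
    ← Finset.mul_sum, Finset.sum_const, Finset.card_univ, nsmul_eq_mul, ← Complex.re_sum, hcross]
  have hcard : (Fintype.card ι : ℝ) * c ^ 2 = c := by
    simpa only [c, inv_inv, sq, mul_assoc] using inv_mul_mul_self c
  linear_combination ‖S‖ ^ 2 * hcard

end CliffordRelations

end

theorem clifford_curvature_term_estimate_general
    {E : Type*} [NormedAddCommGroup E] [InnerProductSpace ℝ E]
    {V : Type*} [NormedAddCommGroup V] [InnerProductSpace ℂ V]
    {m n : ℕ} (hn : 1 ≤ n)
    (ν : Fin n → E)
    (horthν : ∀ α β, (inner ℝ (ν α) (ν β) : ℝ) = if α = β then 1 else 0)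
    (γ : E →ₗ[ℝ] Module.End ℂ V)
    (hcl : ∀ v w : E, γ v * γ w + γ w * γ v
      = (((-(2 * (inner ℝ v w : ℝ))) : ℝ) : ℂ) • (1 : Module.End ℂ V))
    (hskew : ∀ (v : E) (x y : V), (inner ℂ (γ v x) y : ℂ) = -(inner ℂ x (γ v y) : ℂ))
    (Ao : Fin n → Fin m → E)
    (htangent : ∀ α i β, (inner ℝ (Ao α i) (ν β) : ℝ) = 0)
    (ψ : V) :
    ((∑ i, ∑ α, ‖γ (Ao α i) ψ‖ ^ 2) - ∑ i, ‖∑ α, γ (Ao α i) (γ (ν α) ψ)‖ ^ 2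
      = (n : ℝ) * (∑ i, ∑ β, ‖γ (Ao β i) ψ
          - ((n : ℂ))⁻¹ • ∑ α, γ (ν β) (γ (Ao α i) (γ (ν α) ψ))‖ ^ 2)
        - ((n : ℝ) - 1) * (∑ α, ∑ i, ‖Ao α i‖ ^ 2) * ‖ψ‖ ^ 2) ∧
    (∑ i, ‖∑ α, γ (Ao α i) (γ (ν α) ψ)‖ ^ 2
      ≤ (∑ i, ∑ α, ‖γ (Ao α i) ψ‖ ^ 2)
        + ((n : ℝ) - 1) * (∑ α, ∑ i, ‖Ao α i‖ ^ 2) * ‖ψ‖ ^ 2) := by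
  have hν : ∀ β, ‖ν β‖ = 1 := fun β =>
    (pow_eq_one_iff_of_nonneg (norm_nonneg _) two_ne_zero).1 <| by
      rw [← real_inner_self_eq_norm_sq, horthν, if_pos rfl]
  have hsquare : ∀ i, _ := fun i =>
    CliffordRelations.sum_norm_sub_inv_card_smul_sq hcl hskew (Ao · i) ν
      (fun α => htangent α i α) hν ψ
  simp only [Fintype.card_fin] at hsquare
  have hnorm : ∀ i α, ‖γ (Ao α i) ψ‖ ^ 2 = ‖Ao α i‖ ^ 2 * ‖ψ‖ ^ 2 := fun i α =>
    CliffordRelations.norm_apply_sq hcl hskew _ ψ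
  have hn0 : (n : ℝ) ≠ 0 := by exact_mod_cast Nat.one_le_iff_ne_zero.mp hn
  have hsq_nonneg : 0 ≤ (n : ℝ) * ∑ i, ∑ β, ‖γ (Ao β i) ψ
      - ((n : ℂ))⁻¹ • ∑ α, γ (ν β) (γ (Ao α i) (γ (ν α) ψ))‖ ^ 2 := by positivity
  refine (fun hidentity => ⟨hidentity, by linarith⟩) ?_
  rw [Finset.sum_congr rfl fun i _ => hsquare i, Finset.sum_sub_distrib, ← Finset.mul_sum,
      ← Finset.sum_mul, Finset.sum_comm (f := fun α i => ‖Ao α i‖ ^ 2)]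
  simp only [hnorm, ← Finset.sum_mul]
  field_simp
  ring

/-- Pointwise algebraic estimate for the curvature term. In a
Euclidean space `E` with orthonormal tangent frame `{e_i}` (i = 1..m) and orthonormal
normal frame `{ν_α}` (α = 1..n, n ≥ 1), Clifford multiplication `γ` on a complex
spinor module `V` with Hermitian inner product (Clifford relations and
skew-adjointness), and traceless symmetric shape data `Å^α(e_i)` tangent-valued:
`Σ_{i,α} |γ(Å^α(e_i))ψ|² - Σ_i |Σ_α γ(Å^α(e_i)·ν_α)ψ|²
  = n Σ_{i,β} |γ(Å^β(e_i))ψ - (1/n) Σ_α γ(ν_β·Å^α(e_i)·ν_α)ψ|² - (n-1)|Å|²|ψ|²`,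
and in particular
`Σ_i |Σ_α γ(Å^α(e_i)·ν_α)ψ|² ≤ Σ_{i,α}|γ(Å^α(e_i))ψ|² + (n-1)|Å|²|ψ|²`. -/
theorem clifford_curvature_term_estimate
    {E : Type*} [NormedAddCommGroup E] [InnerProductSpace ℝ E]
    {V : Type*} [NormedAddCommGroup V] [InnerProductSpace ℂ V]
    {m n : ℕ} (hn : 1 ≤ n)
    (e : Fin m → E) (ν : Fin n → E)
    (horthe : ∀ i j, (inner ℝ (e i) (e j) : ℝ) = if i = j then 1 else 0)
    (horthν : ∀ α β, (inner ℝ (ν α) (ν β) : ℝ) = if α = β then 1 else 0)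
    (horth : ∀ i α, (inner ℝ (e i) (ν α) : ℝ) = 0)
    (γ : E →ₗ[ℝ] Module.End ℂ V)
    (hcl : ∀ v w : E, γ v * γ w + γ w * γ v
      = (((-(2 * (inner ℝ v w : ℝ))) : ℝ) : ℂ) • (1 : Module.End ℂ V))
    (hskew : ∀ (v : E) (x y : V), (inner ℂ (γ v x) y : ℂ) = -(inner ℂ x (γ v y) : ℂ))
    (Ao : Fin n → Fin m → E)
    (htangent : ∀ α i β, (inner ℝ (Ao α i) (ν β) : ℝ) = 0)
    (hsymm : ∀ α i j, (inner ℝ (Ao α i) (e j) : ℝ) = (inner ℝ (Ao α j) (e i) : ℝ))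
    (htraceless : ∀ α, ∑ i, (inner ℝ (Ao α i) (e i) : ℝ) = 0)
    (ψ : V) :
    ((∑ i, ∑ α, ‖γ (Ao α i) ψ‖ ^ 2) - ∑ i, ‖∑ α, γ (Ao α i) (γ (ν α) ψ)‖ ^ 2
      = (n : ℝ) * (∑ i, ∑ β, ‖γ (Ao β i) ψ
          - ((n : ℂ))⁻¹ • ∑ α, γ (ν β) (γ (Ao α i) (γ (ν α) ψ))‖ ^ 2)
        - ((n : ℝ) - 1) * (∑ α, ∑ i, ‖Ao α i‖ ^ 2) * ‖ψ‖ ^ 2) ∧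
    (∑ i, ‖∑ α, γ (Ao α i) (γ (ν α) ψ)‖ ^ 2
      ≤ (∑ i, ∑ α, ‖γ (Ao α i) ψ‖ ^ 2)
        + ((n : ℝ) - 1) * (∑ α, ∑ i, ‖Ao α i‖ ^ 2) * ‖ψ‖ ^ 2) :=
  clifford_curvature_term_estimate_general hn ν horthν γ hcl hskew Ao htangent ψ
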